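/- Let α = (Q(z)/D(z)^P) η_n where Q is homogeneous of degree q, D is homogeneous of degree δ, and q + n = Pδ (so that α is homogeneous of total degree 0 counting η_n as degree n). Then α is a closed form wherever D(z) ≠ 0: dα = 0. -/

import Mathlib

open Finset

/-- A (mixed-degree) differential form on `ℝⁿ`, given by its coefficient
functions in the basis of wedge products `ω_B = ⋀_{i ∈ B} dz_i`. -/
abbrev Form (n : ℕ) := Finset (Fin n) → (Fin n → ℝ) → ℝ

/-- The signature factor `ε_{k,B} = (-1)^{|{i ∈ B : i < k}|}`. -/
def sgn {n : ℕ} (k : Fin n) (B : Finset (Fin n)) : ℝ :=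
  (-1 : ℝ) ^ (B.filter (fun i => i < k)).card

/-- The form `η_n = Σ_{i=1}^n (−1)^{i−1} z_i dz₁∧...∧d̂z_i∧...∧dzₙ`
(indices shifted to start from 0). -/
def etaTop (n : ℕ) : Form n :=
  fun B z => ∑ i : Fin n, (-1 : ℝ) ^ (i : ℕ) * z i * (if B = univ.erase i then 1 else 0)

/-- The exterior derivative, in coefficient form:
`(dF)_B = Σ_{k ∈ B} ε_{k, B \ {k}} ∂_k F_{B \ {k}}`. -/
noncomputable def extDer {n : ℕ} (F : Form n) : Form n :=
  fun B z => ∑ k ∈ B, sgn k (B.erase k) * fderiv ℝ (F (B.erase k)) z (Pi.single k 1)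

/-- If `Q` is homogeneous of degree `q`, `D` homogeneous of degree `δ`
(via Euler's identities), and `q + n = Pδ`, then `α = (Q/D^P) η_n` is closed
on the open set `{D > 0}`: `dα = 0`. -/
theorem stmt12 (n : ℕ) (Q D : (Fin n → ℝ) → ℝ) (q δ P : ℝ)
    (hQ : ContDiff ℝ (⊤ : ℕ∞) Q) (hD : ContDiff ℝ (⊤ : ℕ∞) D)
    (hQhom : ∀ z, ∑ i : Fin n, z i * fderiv ℝ Q z (Pi.single i 1) = q * Q z)
    (hDhom : ∀ z, ∑ i : Fin n, z i * fderiv ℝ D z (Pi.single i 1) = δ * D z)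
    (hdeg : q + n = P * δ)
    (α : Form n) (hα : α = fun B z => Q z / D z ^ P * etaTop n B z) :
    ∀ z, 0 < D z → ∀ B, extDer α B z = 0 := by
  subst hα
  intro z hz B
  by_cases hB : B = univ
  · subst hB
    have hDz : D z ≠ 0 := ne_of_gt hz
    have hDp : (0:ℝ) < D z ^ P := Real.rpow_pos_of_pos hz P
    have hDpne : D z ^ P ≠ 0 := hDp.ne'
    have hQd : HasFDerivAt Q (fderiv ℝ Q z) z := (hQ.differentiable (by simp) z).hasFDerivAt
    have hDd : HasFDerivAt D (fderiv ℝ D z) z := (hD.differentiable (by simp) z).hasFDerivAt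
    have hDP : HasFDerivAt (fun w => D w ^ P) ((P * D z ^ (P-1)) • fderiv ℝ D z) z :=
      hDd.rpow_const (Or.inl hDz)
    have hinv : HasFDerivAt (fun w => (D w ^ P)⁻¹)
        ((-((D z ^ P) ^ 2)⁻¹) • ((P * D z ^ (P-1)) • fderiv ℝ D z)) z :=
      (hasDerivAt_inv hDpne).comp_hasFDerivAt z hDP
    set L : (Fin n → ℝ) →L[ℝ] ℝ :=
      Q z • ((-((D z ^ P) ^ 2)⁻¹) • ((P * D z ^ (P-1)) • fderiv ℝ D z))
        + (D z ^ P)⁻¹ • fderiv ℝ Q z with hL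
    have hg : HasFDerivAt (fun w => Q w / D w ^ P) L z := by
      have := hQd.mul hinv
      simpa [div_eq_mul_inv, hL, Pi.mul_def] using this
    -- the coefficient function of α on univ.erase k
    have heta : ∀ (k : Fin n) (w : Fin n → ℝ),
        etaTop n (univ.erase k) w = (-1:ℝ)^(k:ℕ) * w k := by
      intro k w
      unfold etaTop
      rw [Finset.sum_eq_single k]
      · simp
      · intro i _ hik
        have : (univ.erase k : Finset (Fin n)) ≠ univ.erase i := by
          intro h
          have hk : k ∈ univ.erase i := Finset.mem_erase.mpr ⟨(Ne.symm hik), mem_univ k⟩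
          rw [← h] at hk
          exact (Finset.notMem_erase k univ) hk
        simp [this]
      · intro h; exact absurd (mem_univ k) h
    have key : ∀ k : Fin n,
        fderiv ℝ (fun w => Q w / D w ^ P * etaTop n (univ.erase k) w) z (Pi.single k 1)
          = Q z / D z ^ P * (-1:ℝ)^(k:ℕ) + (-1:ℝ)^(k:ℕ) * z k * L (Pi.single k 1) := by
      intro k
      have hfun : (fun w => Q w / D w ^ P * etaTop n (univ.erase k) w)
          = fun w => (Q w / D w ^ P) * ((-1:ℝ)^(k:ℕ) * w k) := by
        funext w; rw [heta]
      have hproj : HasFDerivAt (fun w : Fin n → ℝ => w k)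
          (ContinuousLinearMap.proj k : (Fin n → ℝ) →L[ℝ] ℝ) z :=
        (ContinuousLinearMap.proj k : (Fin n → ℝ) →L[ℝ] ℝ).hasFDerivAt
      have hmul := hg.mul (hproj.const_mul ((-1:ℝ)^(k:ℕ)))
      rw [hfun, show (fun w => Q w / D w ^ P * ((-1:ℝ)^(k:ℕ) * w k)) = ((fun w => Q w / D w ^ P) * fun y => (-1:ℝ)^(k:ℕ) * y k) from rfl, hmul.fderiv]
      simp [mul_comm, mul_assoc]
    have hsgn : ∀ k : Fin n, sgn k (univ.erase k) = (-1:ℝ)^(k:ℕ) := by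
      intro k
      unfold sgn
      congr 1
      have : (univ.erase k).filter (fun i => i < k) = Finset.Iio k := by
        ext i; simp [Finset.mem_erase, Finset.mem_Iio, and_comm]
        intro h; exact ne_of_lt h
      rw [this, Fin.card_Iio]
    have hL1 : ∑ k : Fin n, z k * L (Pi.single k 1)
        = (q - P * δ) * (Q z / D z ^ P) := by
      have hLapp : ∀ k : Fin n, L (Pi.single k 1)
          = Q z * (-((D z ^ P) ^ 2)⁻¹ * (P * D z ^ (P-1) * fderiv ℝ D z (Pi.single k 1)))
            + (D z ^ P)⁻¹ * fderiv ℝ Q z (Pi.single k 1) := by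
        intro k; simp [hL]
      calc ∑ k : Fin n, z k * L (Pi.single k 1)
          = Q z * (-((D z ^ P) ^ 2)⁻¹ * (P * D z ^ (P-1)
            * ∑ k : Fin n, z k * fderiv ℝ D z (Pi.single k 1)))
            + (D z ^ P)⁻¹ * ∑ k : Fin n, z k * fderiv ℝ Q z (Pi.single k 1) := by
            simp only [hLapp, Finset.mul_sum]
            rw [← Finset.sum_add_distrib]
            congr 1; funext k; ring
        _ = Q z * (-((D z ^ P) ^ 2)⁻¹ * (P * D z ^ (P-1) * (δ * D z)))
            + (D z ^ P)⁻¹ * (q * Q z) := by rw [hQhom, hDhom]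
        _ = (q - P * δ) * (Q z / D z ^ P) := by
            have hrw : D z ^ (P-1) * D z = D z ^ P := by
              rw [Real.rpow_sub_one hDz]; field_simp
            rw [show P * D z ^ (P-1) * (δ * D z) = P * δ * (D z ^ (P-1) * D z) by ring, hrw]
            field_simp
            ring
    unfold extDer
    have : ∀ k ∈ univ, sgn k ((univ : Finset (Fin n)).erase k)
        * fderiv ℝ ((fun B z => Q z / D z ^ P * etaTop n B z) ((univ : Finset (Fin n)).erase k)) z (Pi.single k 1)
        = Q z / D z ^ P + z k * L (Pi.single k 1) := by
      intro k _
      rw [hsgn, key]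
      have h1 : ((-1:ℝ))^(k:ℕ) * ((-1:ℝ))^(k:ℕ) = 1 := by
        rw [← pow_add]; exact Even.neg_one_pow ⟨k, rfl⟩
      linear_combination (Q z / D z ^ P + z k * L (Pi.single k 1)) * h1
    rw [Finset.sum_congr rfl this, Finset.sum_add_distrib, hL1, Finset.sum_const]
    simp only [Finset.card_univ, Fintype.card_fin, nsmul_eq_mul]
    have : q - P * δ = -(n:ℝ) := by linarith
    rw [this]; ring
  · unfold extDer
    apply Finset.sum_eq_zero
    intro k hk
    have hzero : ((fun B z => Q z / D z ^ P * etaTop n B z) (B.erase k)) = fun _ => (0:ℝ) := by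
      funext w
      have : etaTop n (B.erase k) w = 0 := by
        unfold etaTop
        apply Finset.sum_eq_zero
        intro i _
        have hne : B.erase k ≠ univ.erase i := by
          intro h
          have h1 : (B.erase k).card = (univ.erase i).card := by rw [h]
          rw [Finset.card_erase_of_mem hk, Finset.card_erase_of_mem (mem_univ i),
            Finset.card_univ, Fintype.card_fin] at h1
          have hBlt : B.card < n := by
            have := Finset.card_lt_card (Finset.ssubset_univ_iff.mpr hB)
            simpa using this
          have hB1 : 1 ≤ B.card := Finset.card_pos.mpr ⟨k, hk⟩
          omega
        simp [hne]
      simp [this]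
    rw [hzero]
    simp
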